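/- Assume the genericity condition. Let x ∈ V with η x = 1 and η w = 0 for every nearest neighbour w of x, let y be a nearest neighbour of x (|y − x|₁ = 1), and let z be a nearest neighbour of y with z ≠ x and η z ≥ 1. Suppose all four nearest neighbours of x and all four nearest neighbours of y lie in V. Then the configuration η' obtained by moving the particle from x to y (η' x = 0, η' y = 1, η' = η elsewhere) does not preserve the interaction energy: H⁰ᵢ(η') ≠ H⁰ᵢ(η). In other words, under the resonant dynamics a lone particle cannot hop onto a site adjacent to another particle: two particles can never come to distance at most 1 from each other. -/

import Mathlib

/-!
Grouping the bonds by direction and by the occupations `(a, b)` at their two ends writes the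
energy as `∑ n i a b • fᵢ(a, b)` with natural coefficients, so by genericity two configurations
of equal energy have the same bond counts `n i a b`. A bond occupied at both ends before the hop
is still occupied in the same way afterwards, since it can touch neither `x` (whose neighbours
are empty) nor the empty site `y`; but the bond `{y, z}` becomes occupied at both ends. Hence
the count of its new occupation pattern strictly increases.
-/

open Finset

/-- First lattice unit vector of `ℤ²`. -/
def e1 : ℤ × ℤ := (1, 0)

/-- Second lattice unit vector of `ℤ²`. -/
def e2 : ℤ × ℤ := (0, 1)

/-- The `ℓ¹` distance on `ℤ²`. -/
def dist1 (x y : ℤ × ℤ) : ℕ :=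
  (x.1 - y.1).natAbs + (x.2 - y.2).natAbs

/-- Interaction energy `H⁰ᵢ(η) = Σ_{x : x, x+e₁ ∈ V} f₁(η x, η (x+e₁))
+ Σ_{x : x, x+e₂ ∈ V} f₂(η x, η (x+e₂))`. -/
noncomputable def interactionEnergy (f1 f2 : ℕ → ℕ → ℝ) (V : Finset (ℤ × ℤ))
    (η : ℤ × ℤ → ℕ) : ℝ :=
  ∑ x ∈ V.filter (fun x => x + e1 ∈ V), f1 (η x) (η (x + e1)) +
  ∑ x ∈ V.filter (fun x => x + e2 ∈ V), f2 (η x) (η (x + e2))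

/-- Genericity condition: the `2(N+1)²` real numbers `f₁(a,b), f₂(a,b)` for
`(a,b) ∈ {0,…,N}²` are linearly independent over `ℚ`. -/
def Generic (N : ℕ) (f1 f2 : ℕ → ℕ → ℝ) : Prop :=
  LinearIndependent ℚ (fun p : Fin 2 × Fin (N + 1) × Fin (N + 1) =>
    if p.1 = 0 then f1 p.2.1 p.2.2 else f2 p.2.1 p.2.2)

def unitVec : Fin 2 → ℤ × ℤ := ![e1, e2]

def bondCount (V : Finset (ℤ × ℤ)) (e : ℤ × ℤ) (η : ℤ × ℤ → ℕ) (a b : ℕ) : ℕ :=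
  #{w ∈ V | w + e ∈ V ∧ η w = a ∧ η (w + e) = b}

lemma dist1_comm (x y : ℤ × ℤ) : dist1 x y = dist1 y x := by
  unfold dist1; omega

lemma dist1_add_unitVec (w : ℤ × ℤ) (i : Fin 2) : dist1 (w + unitVec i) w = 1 := by
  fin_cases i <;> simp [dist1, unitVec, e1, e2]

lemma exists_unitVec_of_dist1_eq_one {y z : ℤ × ℤ} (h : dist1 z y = 1) :
    ∃ i, z = y + unitVec i ∨ y = z + unitVec i := by
  obtain ⟨z₁, z₂⟩ := z
  obtain ⟨y₁, y₂⟩ := y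
  simp only [dist1] at h
  have : (z₁ = y₁ + 1 ∨ y₁ = z₁ + 1) ∧ z₂ = y₂ ∨ z₁ = y₁ ∧ (z₂ = y₂ + 1 ∨ y₂ = z₂ + 1) := by
    omega
  rcases this with ⟨h₁ | h₁, h₂⟩ | ⟨h₁, h₂ | h₂⟩
  · exact ⟨0, .inl (by simp [unitVec, e1, h₁, h₂])⟩
  · exact ⟨0, .inr (by simp [unitVec, e1, h₁, h₂])⟩
  · exact ⟨1, .inl (by simp [unitVec, e2, h₁, h₂])⟩
  · exact ⟨1, .inr (by simp [unitVec, e2, h₁, h₂])⟩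

lemma sum_bond_eq_sum_bondCount (f : ℕ → ℕ → ℝ) (V : Finset (ℤ × ℤ)) (e : ℤ × ℤ)
    {N : ℕ} {η : ℤ × ℤ → ℕ} (hη : ∀ w, η w ≤ N) :
    ∑ w ∈ V with w + e ∈ V, f (η w) (η (w + e))
      = ∑ a : Fin (N + 1), ∑ b : Fin (N + 1), bondCount V e η a b • f a b := by
  have hmaps : ∀ w ∈ {w ∈ V | w + e ∈ V}, (η w, η (w + e)) ∈ range (N + 1) ×ˢ range (N + 1) :=
    fun w _ => by simp [Nat.lt_succ_of_le (hη _)]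
  rw [← sum_fiberwise_of_maps_to hmaps, sum_product,
    Fin.sum_univ_eq_sum_range (fun a => ∑ b : Fin (N + 1), bondCount V e η a b • f a b)]
  refine sum_congr rfl fun a _ => ?_
  rw [Fin.sum_univ_eq_sum_range (fun b => bondCount V e η a b • f a b)]
  refine sum_congr rfl fun b _ => ?_
  rw [filter_filter, bondCount, ← sum_const]
  refine sum_congr ?_ fun w hw => ?_
  · simp only [Prod.mk.injEq]
  · simp only [mem_filter] at hw
    rw [hw.2.2.1, hw.2.2.2]

lemma interactionEnergy_eq_sum_bondCount (f1 f2 : ℕ → ℕ → ℝ) (V : Finset (ℤ × ℤ))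
    {N : ℕ} {η : ℤ × ℤ → ℕ} (hη : ∀ w, η w ≤ N) :
    interactionEnergy f1 f2 V η = ∑ p : Fin 2 × Fin (N + 1) × Fin (N + 1),
      (bondCount V (unitVec p.1) η p.2.1 p.2.2 : ℚ) •
        (if p.1 = 0 then f1 p.2.1 p.2.2 else f2 p.2.1 p.2.2) := by
  simp only [Fintype.sum_prod_type, Fin.sum_univ_two, Nat.cast_smul_eq_nsmul]
  simp [interactionEnergy, unitVec, sum_bond_eq_sum_bondCount _ _ _ hη]

lemma Generic.bondCount_eq {N : ℕ} {f1 f2 : ℕ → ℕ → ℝ} (hgen : Generic N f1 f2)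
    {V : Finset (ℤ × ℤ)} {η η' : ℤ × ℤ → ℕ} (hη : ∀ w, η w ≤ N) (hη' : ∀ w, η' w ≤ N)
    (heq : interactionEnergy f1 f2 V η = interactionEnergy f1 f2 V η') (i : Fin 2)
    {a b : ℕ} (ha : a ≤ N) (hb : b ≤ N) :
    bondCount V (unitVec i) η a b = bondCount V (unitVec i) η' a b := by
  rw [interactionEnergy_eq_sum_bondCount _ _ _ hη,
    interactionEnergy_eq_sum_bondCount _ _ _ hη'] at heq
  exact_mod_cast Fintype.linearIndependent_iffₛ.mp hgen _ _ heq
    (i, ⟨a, Nat.lt_succ_of_le ha⟩, ⟨b, Nat.lt_succ_of_le hb⟩)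

lemma bondCount_lt_bondCount {V : Finset (ℤ × ℤ)} {e : ℤ × ℤ} {η η' : ℤ × ℤ → ℕ} {a b : ℕ}
    (hsub : ∀ w ∈ V, w + e ∈ V → η w = a → η (w + e) = b → η' w = a ∧ η' (w + e) = b)
    {u : ℤ × ℤ} (hu : u ∈ V) (hue : u + e ∈ V) (hnew : η' u = a ∧ η' (u + e) = b)
    (hold : ¬(η u = a ∧ η (u + e) = b)) :
    bondCount V e η a b < bondCount V e η' a b := by
  refine card_lt_card ((ssubset_iff_of_subset fun w hw => ?_).mpr ⟨u, ?_, ?_⟩)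
  · simp only [mem_filter] at hw ⊢
    exact ⟨hw.1, hw.2.1, hsub w hw.1 hw.2.1 hw.2.2.1 hw.2.2.2⟩
  · simp [hu, hue, hnew]
  · simpa [hu, hue] using hold

lemma hop_fixes_occupied_bond {x y : ℤ × ℤ} {η η' : ℤ × ℤ → ℕ}
    (hempty : ∀ w, dist1 w x = 1 → η w = 0) (hy : η y = 0)
    (h' : ∀ w, w ≠ x → w ≠ y → η' w = η w) (i : Fin 2) {w : ℤ × ℤ} (hw : η w ≠ 0)
    (hwe : η (w + unitVec i) ≠ 0) : η' w = η w ∧ η' (w + unitVec i) = η (w + unitVec i) := by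
  have hwx : w ≠ x := fun h => hwe (hempty _ (h ▸ dist1_add_unitVec w i))
  have hwex : w + unitVec i ≠ x :=
    fun h => hw (hempty _ (h ▸ (dist1_comm _ _).trans (dist1_add_unitVec w i)))
  exact ⟨h' w hwx (fun h => hw (h ▸ hy)), h' _ hwex (fun h => hwe (h ▸ hy))⟩

lemma bondCount_lt_of_hop {x y : ℤ × ℤ} {η η' : ℤ × ℤ → ℕ}
    (hempty : ∀ w, dist1 w x = 1 → η w = 0) (hy : η y = 0)
    (h' : ∀ w, w ≠ x → w ≠ y → η' w = η w) {V : Finset (ℤ × ℤ)} (i : Fin 2) {u : ℤ × ℤ}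
    (hu : u ∈ V) (hue : u + unitVec i ∈ V) (hold : η u = 0 ∨ η (u + unitVec i) = 0)
    (hnew : η' u ≠ 0) (hnew' : η' (u + unitVec i) ≠ 0) :
    bondCount V (unitVec i) η (η' u) (η' (u + unitVec i))
      < bondCount V (unitVec i) η' (η' u) (η' (u + unitVec i)) := by
  refine bondCount_lt_bondCount (fun w _ _ ha hb => ?_) hu hue ⟨rfl, rfl⟩ (by omega)
  obtain ⟨hw, hwe⟩ := hop_fixes_occupied_bond hempty hy h' i (w := w) (by omega) (by omega)
  exact ⟨hw.trans ha, hwe.trans hb⟩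

theorem no_resonant_hop_next_to_particle_general (N : ℕ) (hN : 1 ≤ N)
    (f1 f2 : ℕ → ℕ → ℝ) (hgen : Generic N f1 f2)
    (V : Finset (ℤ × ℤ)) (x y z : ℤ × ℤ)
    (hnbx : ∀ w : ℤ × ℤ, dist1 w x = 1 → w ∈ V)
    (hnby : ∀ w : ℤ × ℤ, dist1 w y = 1 → w ∈ V)
    (hxy : dist1 y x = 1) (hyz : dist1 z y = 1) (hzx : z ≠ x)
    (η η' : ℤ × ℤ → ℕ) (hη : ∀ w, η w ≤ N)
    (hempty : ∀ w : ℤ × ℤ, dist1 w x = 1 → η w = 0)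
    (hz1 : 1 ≤ η z)
    (h'x : η' x = 0) (h'y : η' y = 1)
    (h' : ∀ w, w ≠ x → w ≠ y → η' w = η w) :
    interactionEnergy f1 f2 V η' ≠ interactionEnergy f1 f2 V η := by
  intro heq
  have hη' : ∀ w, η' w ≤ N := fun w => by
    by_cases hwx : w = x
    · simp [hwx, h'x]
    by_cases hwy : w = y
    · simp [hwy, h'y, hN]
    · simpa [h' w hwx hwy] using hη w
  have hy : η y = 0 := hempty y hxy
  have hzy : z ≠ y := by rintro rfl; simp [dist1] at hyz
  have h'z : η' z = η z := h' z hzx hzy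
  have hyV : y ∈ V := hnbx y hxy
  have hzV : z ∈ V := hnby z hyz
  obtain ⟨i, hz | hy'⟩ := exists_unitVec_of_dist1_eq_one hyz
  · subst hz
    exact (bondCount_lt_of_hop hempty hy h' i hyV hzV (.inl hy) (by omega) (by omega)).ne
      (hgen.bondCount_eq hη hη' heq.symm i (hη' _) (hη' _))
  · subst hy'
    exact (bondCount_lt_of_hop hempty hy h' i hzV hyV (.inr hy) (by omega) (by omega)).ne
      (hgen.bondCount_eq hη hη' heq.symm i (hη' _) (hη' _))

/-- **Two particles can never come to distance at most `1` under the resonant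
dynamics.** Under the genericity condition, let `x ∈ V` carry a single particle
with all its nearest neighbours empty, let `y` be a nearest neighbour of `x`, and
let `z ≠ x` be a nearest neighbour of `y` carrying at least one particle; assume
all four nearest neighbours of `x` and of `y` lie in `V`. Then moving the
particle from `x` to `y` does not preserve the interaction energy. -/
theorem no_resonant_hop_next_to_particle (N : ℕ) (hN : 1 ≤ N)
    (f1 f2 : ℕ → ℕ → ℝ) (hgen : Generic N f1 f2)
    (V : Finset (ℤ × ℤ)) (x y z : ℤ × ℤ) (hxV : x ∈ V)
    (hnbx : ∀ w : ℤ × ℤ, dist1 w x = 1 → w ∈ V)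
    (hnby : ∀ w : ℤ × ℤ, dist1 w y = 1 → w ∈ V)
    (hxy : dist1 y x = 1) (hyz : dist1 z y = 1) (hzx : z ≠ x)
    (η η' : ℤ × ℤ → ℕ) (hη : ∀ w, η w ≤ N)
    (hx1 : η x = 1) (hempty : ∀ w : ℤ × ℤ, dist1 w x = 1 → η w = 0)
    (hz1 : 1 ≤ η z)
    (h'x : η' x = 0) (h'y : η' y = 1)
    (h' : ∀ w, w ≠ x → w ≠ y → η' w = η w) :
    interactionEnergy f1 f2 V η' ≠ interactionEnergy f1 f2 V η :=
  no_resonant_hop_next_to_particle_general N hN f1 f2 hgen V x y z hnbx hnby hxy hyz hzx η η' hη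
    hempty hz1 h'x h'y h'
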